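/- arXiv:2402.15016 — 7 statements merged into one kernel-verified Lean document; each statement's English description precedes it below -/
import Mathlib

section
/- Let h : ℝⁿ → ℝ be differentiable, let L > 0, and let v ∈ ℝⁿ satisfy h(v) > 0 and R_v > 0. Then ‖∇h(v)‖²/2 ≤ p_v ≤ ‖∇h(v)‖². -/
/-- The center of the ball associated with the quadratic upper approximation
of `h` at `v` with parameter `L`: `c_v = v - (1/L) ∇h(v)`. -/
noncomputable def ballCenter {n : ℕ} (h : EuclideanSpace ℝ (Fin n) → ℝ) (L : ℝ)
    (v : EuclideanSpace ℝ (Fin n)) : EuclideanSpace ℝ (Fin n) :=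
  v - (1 / L) • gradient h v

/-- The radius term `R_v = ‖∇h(v)‖²/L² - 2 h(v)/L`. -/
noncomputable def ballRadius {n : ℕ} (h : EuclideanSpace ℝ (Fin n) → ℝ) (L : ℝ)
    (v : EuclideanSpace ℝ (Fin n)) : ℝ :=
  ‖gradient h v‖ ^ 2 / L ^ 2 - 2 * h v / L

/-- The adaptive parameter `p_v = ((h(v))₊ L) / (1 - √((R_v)₊)/‖v - c_v‖)`,
where division by zero is interpreted as zero (Lean's convention). -/
noncomputable def adaptP {n : ℕ} (h : EuclideanSpace ℝ (Fin n) → ℝ) (L : ℝ)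
    (v : EuclideanSpace ℝ (Fin n)) : ℝ :=
  max (h v) 0 * L /
    (1 - Real.sqrt (max (ballRadius h L v) 0) / ‖v - ballCenter h L v‖)

theorem stmt_3 {n : ℕ} (h : EuclideanSpace ℝ (Fin n) → ℝ)
    (hdiff : Differentiable ℝ h) (L : ℝ) (hL : 0 < L)
    (v : EuclideanSpace ℝ (Fin n)) (hv : 0 < h v) (hR : 0 < ballRadius h L v) :
    ‖gradient h v‖ ^ 2 / 2 ≤ adaptP h L v ∧ adaptP h L v ≤ ‖gradient h v‖ ^ 2 := by
  set u := gradient h v with hu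
  have hL' : L ≠ 0 := ne_of_gt hL
  have hg2 : 2 * h v * L < ‖u‖ ^ 2 := by
    have hR' : 0 < ‖u‖ ^ 2 / L ^ 2 - 2 * h v / L := hR
    have hL2 : 0 < L ^ 2 := by positivity
    have key : ‖u‖ ^ 2 - 2 * h v * L = (‖u‖ ^ 2 / L ^ 2 - 2 * h v / L) * L ^ 2 := by
      field_simp
    nlinarith [mul_pos hR' hL2]
  have hg : 0 < ‖u‖ := by nlinarith [norm_nonneg u]
  have hvc : v - ballCenter h L v = (1 / L) • u := by
    simp [ballCenter, hu]
  have hnorm : ‖v - ballCenter h L v‖ = ‖u‖ / L := by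
    rw [hvc, norm_smul]
    simp [abs_of_pos hL, div_eq_inv_mul]
  set s := Real.sqrt (‖u‖ ^ 2 - 2 * h v * L) with hs
  have hs0 : 0 ≤ s := Real.sqrt_nonneg _
  have hs2 : s ^ 2 = ‖u‖ ^ 2 - 2 * h v * L := Real.sq_sqrt (by linarith)
  have hslt : s < ‖u‖ := by nlinarith [mul_pos hv hL]
  have hsqrt : Real.sqrt (max (ballRadius h L v) 0) = s / L := by
    rw [max_eq_left hR.le]
    have : ballRadius h L v = (s / L) ^ 2 := by
      rw [div_pow, hs2]; unfold ballRadius; field_simp; ring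
    rw [this, Real.sqrt_sq (by positivity)]
  have hmax : max (h v) 0 = h v := max_eq_left hv.le
  have hden : 1 - (s / L) / (‖u‖ / L) = (‖u‖ - s) / ‖u‖ := by
    field_simp
  have hP : adaptP h L v = ‖u‖ * (‖u‖ + s) / 2 := by
    unfold adaptP
    rw [hsqrt, hnorm, hmax, hden]
    rw [div_div_eq_mul_div, div_eq_div_iff (by linarith) (by norm_num)]
    nlinarith
  constructor
  · rw [hP]; nlinarith
  · rw [hP]; nlinarith
end

section
/- Let h : ℝⁿ → ℝ be convex and differentiable, let Y ⊆ ℝⁿ be nonempty closed convex, and let X* ⊆ Y be nonempty closed convex. Let v ∈ ℝⁿ with h(v) > 0, set v̄ = Π_{X*}(v), and assume h(v̄) ≤ 0. Let β > 0 and p > 0, define z = v − β·(h(v)/p)·∇h(v) and x⁺ = Π_Y(z). Then dist²(x⁺, X*) ≤ ‖v − v̄‖² − 2β·h(v)²/p + β²·(h(v)²/p²)·‖∇h(v)‖². -/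
/-!
Projecting onto `Y ⊇ X*` moves `z` closer to every point of `X*`, in particular to `v̄`, so
`dist(x⁺, X*) ≤ ‖x⁺ - v̄‖ ≤ ‖z - v̄‖`. Expanding `‖z - v̄‖²` leaves the cross term
`-2β (h(v)/p) ⟪∇h(v), v - v̄⟫`, and the gradient inequality together with `h(v̄) ≤ 0` gives
`⟪∇h(v), v - v̄⟫ ≥ h(v) - h(v̄) ≥ h(v)`.
-/

open Metric
open scoped RealInnerProductSpace

section FirstOrderCondition

variable {E : Type*} [NormedAddCommGroup E] [NormedSpace ℝ E] {s : Set E} {f : E → ℝ} {x y : E}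

theorem ConvexOn.add_fderiv_sub_le {f' : E →L[ℝ] ℝ} (hf : ConvexOn ℝ s f) (hx : x ∈ s)
    (hy : y ∈ s) (hf' : HasFDerivAt f f' x) : f x + f' (y - x) ≤ f y := by
  set ℓ := AffineMap.lineMap (k := ℝ) x y
  have hcomp : HasDerivAt (f ∘ ℓ) (f' (y - x)) 0 :=
    (by simpa [ℓ] using hf' : HasFDerivAt f f' (ℓ 0)).comp_hasDerivAt 0
      AffineMap.hasDerivAt_lineMap
  have hslope := (hf.comp_affineMap ℓ).le_slope_of_hasDerivAt
    (by simpa [ℓ] using hx) (by simpa [ℓ] using hy) zero_lt_one hcomp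
  simp only [slope_def_field, Function.comp_apply, ℓ, AffineMap.lineMap_apply_zero,
    AffineMap.lineMap_apply_one, sub_zero, div_one] at hslope
  linarith

end FirstOrderCondition

section InnerProduct

variable {F : Type*} [NormedAddCommGroup F] [InnerProductSpace ℝ F]

theorem ConvexOn.add_inner_gradient_sub_le [CompleteSpace F] {s : Set F} {f : F → ℝ} {g x y : F}
    (hf : ConvexOn ℝ s f) (hx : x ∈ s) (hy : y ∈ s) (hg : HasGradientAt f g x) :
    f x + ⟪g, y - x⟫ ≤ f y := by
  simpa using hf.add_fderiv_sub_le hx hy (hasGradientAt_iff_hasFDerivAt.mp hg)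

theorem Convex.norm_sub_le_of_isMinOn {K : Set F} {z q y : F} (hK : Convex ℝ K) (hq : q ∈ K)
    (hmin : IsMinOn (fun w => ‖z - w‖) K q) (hy : y ∈ K) : ‖q - y‖ ≤ ‖z - y‖ := by
  have : Nonempty K := ⟨⟨q, hq⟩⟩
  have hbdd : BddBelow (Set.range fun w : K => ‖z - w‖) :=
    ⟨0, by rintro r ⟨w, rfl⟩; positivity⟩
  have hinf : ‖z - q‖ = ⨅ w : K, ‖z - w‖ :=
    le_antisymm (le_ciInf fun w => isMinOn_iff.mp hmin w w.2) (ciInf_le hbdd ⟨q, hq⟩)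
  have hobtuse : ⟪z - q, y - q⟫ ≤ 0 :=
    (norm_eq_iInf_iff_real_inner_le_zero hK hq).mp hinf y hy
  have hexpand : ‖z - y‖ ^ 2 = ‖z - q‖ ^ 2 - 2 * ⟪z - q, y - q⟫ + ‖q - y‖ ^ 2 := by
    rw [show z - y = (z - q) - (y - q) by abel, norm_sub_sq_real, norm_sub_rev q y]
  nlinarith [sq_nonneg ‖z - q‖, norm_nonneg (q - y), norm_nonneg (z - y)]

theorem norm_sub_smul_sub_sq_le {v g w : F} {t a : ℝ} (ht : 0 ≤ t) (ha : a ≤ ⟪g, v - w⟫) :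
    ‖v - t • g - w‖ ^ 2 ≤ ‖v - w‖ ^ 2 - 2 * t * a + t ^ 2 * ‖g‖ ^ 2 := by
  rw [show v - t • g - w = (v - w) - t • g by abel, norm_sub_sq_real, inner_smul_right,
    real_inner_comm, norm_smul, Real.norm_of_nonneg ht]
  nlinarith

end InnerProduct

theorem stmt_7_general {n : ℕ} (h : EuclideanSpace ℝ (Fin n) → ℝ)
    (hconv : ConvexOn ℝ Set.univ h) (hdiff : Differentiable ℝ h)
    (Y Xstar : Set (EuclideanSpace ℝ (Fin n)))
    (hYcv : Convex ℝ Y)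
    (hXsY : Xstar ⊆ Y)
    (v : EuclideanSpace ℝ (Fin n)) (hv : 0 < h v)
    -- `vbar = Π_{X*}(v)` : projection of `v` onto `X*`
    (vbar : EuclideanSpace ℝ (Fin n)) (hvbarmem : vbar ∈ Xstar)
    (hfeas : h vbar ≤ 0)
    (β p : ℝ) (hβ : 0 < β) (hp : 0 < p)
    (z : EuclideanSpace ℝ (Fin n))
    (hz : z = v - (β * (h v / p)) • gradient h v)
    -- `xplus = Π_Y(z)` : projection of `z` onto `Y`
    (xplus : EuclideanSpace ℝ (Fin n)) (hxpmem : xplus ∈ Y)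
    (hxpproj : ∀ y ∈ Y, ‖z - xplus‖ ≤ ‖z - y‖) :
    (infDist xplus Xstar) ^ 2
      ≤ ‖v - vbar‖ ^ 2 - 2 * β * (h v) ^ 2 / p
        + β ^ 2 * ((h v) ^ 2 / p ^ 2) * ‖gradient h v‖ ^ 2 := by
  have hgrad : h v ≤ ⟪gradient h v, v - vbar⟫ := by
    have := hconv.add_inner_gradient_sub_le (Set.mem_univ v) (Set.mem_univ vbar)
      (hdiff v).hasGradientAt
    rw [← neg_sub, inner_neg_right] at this
    linarith
  have hstep := norm_sub_smul_sub_sq_le (by positivity : 0 ≤ β * (h v / p)) hgrad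
  have hproj : ‖xplus - vbar‖ ≤ ‖z - vbar‖ :=
    hYcv.norm_sub_le_of_isMinOn hxpmem (isMinOn_iff.mpr hxpproj) (hXsY hvbarmem)
  have hdist : infDist xplus Xstar ≤ ‖xplus - vbar‖ := by
    simpa [dist_eq_norm] using infDist_le_dist_of_mem hvbarmem
  calc infDist xplus Xstar ^ 2 ≤ ‖z - vbar‖ ^ 2 := by
        gcongr
        exacts [infDist_nonneg, hdist.trans hproj]
    _ ≤ _ := hz ▸ hstep
    _ = _ := by field_simp

theorem stmt_7 {n : ℕ} (h : EuclideanSpace ℝ (Fin n) → ℝ)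
    (hconv : ConvexOn ℝ Set.univ h) (hdiff : Differentiable ℝ h)
    (Y Xstar : Set (EuclideanSpace ℝ (Fin n)))
    (hYne : Y.Nonempty) (hYcl : IsClosed Y) (hYcv : Convex ℝ Y)
    (hXsne : Xstar.Nonempty) (hXscl : IsClosed Xstar) (hXscv : Convex ℝ Xstar)
    (hXsY : Xstar ⊆ Y)
    (v : EuclideanSpace ℝ (Fin n)) (hv : 0 < h v)
    -- `vbar = Π_{X*}(v)` : projection of `v` onto `X*`
    (vbar : EuclideanSpace ℝ (Fin n)) (hvbarmem : vbar ∈ Xstar)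
    (hvbarproj : ∀ y ∈ Xstar, ‖v - vbar‖ ≤ ‖v - y‖)
    (hfeas : h vbar ≤ 0)
    (β p : ℝ) (hβ : 0 < β) (hp : 0 < p)
    (z : EuclideanSpace ℝ (Fin n))
    (hz : z = v - (β * (h v / p)) • gradient h v)
    -- `xplus = Π_Y(z)` : projection of `z` onto `Y`
    (xplus : EuclideanSpace ℝ (Fin n)) (hxpmem : xplus ∈ Y)
    (hxpproj : ∀ y ∈ Y, ‖z - xplus‖ ≤ ‖z - y‖) :
    (infDist xplus Xstar) ^ 2
      ≤ ‖v - vbar‖ ^ 2 - 2 * β * (h v) ^ 2 / p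
        + β ^ 2 * ((h v) ^ 2 / p ^ 2) * ‖gradient h v‖ ^ 2 :=
  stmt_7_general h hconv hdiff Y Xstar hYcv hXsY v hv vbar hvbarmem hfeas β p hβ hp z hz xplus
    hxpmem hxpproj
end

section
/- Let h : ℝⁿ → ℝ be convex and differentiable with L-Lipschitz gradient, L > 0. Let Y ⊆ ℝⁿ be nonempty closed convex and X* ⊆ Y nonempty closed convex. Let v ∈ ℝⁿ satisfy h(v) > 0 and R_v ≤ 0, set v̄ = Π_{X*}(v) and assume h(v̄) ≤ 0. Let β ∈ (0,1) and M_h > 0 with h(v) ≤ M_h. Define z = v − (β/L)·∇h(v) and x⁺ = Π_Y(z). Then dist²(x⁺, X*) ≤ ‖v − v̄‖² − (2β(1 − β)/(M_h·L))·h(v)². -/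
/-!
Convexity gives `h v ≤ h v - h v̄ ≤ ⟪∇h v, v - v̄⟫` since `v̄` is feasible, and `R_v ≤ 0` says
`‖∇h v‖² ≤ 2 L h v`. Expanding `‖z - v̄‖²` with these two bounds shows that the gradient step
decreases the squared distance to `v̄` by `2β(1 - β) h v / L`, and projecting onto `Y ∋ v̄` can
only decrease it further. Finally `h v ≤ M_h` turns `h v` into `h v² / M_h`.
-/

open Metric

open scoped RealInnerProductSpace

theorem ConvexOn.fderiv_sub_le {E : Type*} [NormedAddCommGroup E] [NormedSpace ℝ E]
    {S : Set E} {f : E → ℝ} {f' : E →L[ℝ] ℝ} {x y : E}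
    (hf : ConvexOn ℝ S f) (hx : x ∈ S) (hy : y ∈ S) (hf' : HasFDerivAt f f' x) :
    f' (y - x) ≤ f y - f x := by
  let γ : ℝ →ᵃ[ℝ] E := AffineMap.lineMap x y
  have hderiv : HasDerivAt (f ∘ γ) (f' (y - x)) 0 :=
    HasFDerivAt.comp_hasDerivAt_of_eq 0 hf' AffineMap.hasDerivAt_lineMap (by simp [γ])
  simpa [γ, slope_def_field] using
    (hf.comp_affineMap γ).le_slope_of_hasDerivAt (by simpa [γ] using hx) (by simpa [γ] using hy)
      one_pos hderiv

theorem ConvexOn.inner_gradient_sub_le {F : Type*} [NormedAddCommGroup F]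
    [InnerProductSpace ℝ F] [CompleteSpace F] {S : Set F} {f : F → ℝ} {x y : F}
    (hf : ConvexOn ℝ S f) (hx : x ∈ S) (hy : y ∈ S) (hfx : DifferentiableAt ℝ f x) :
    ⟪gradient f x, y - x⟫ ≤ f y - f x := by
  simpa using hf.fderiv_sub_le hx hy hfx.hasFDerivAt

section Projection

variable {F : Type*} [NormedAddCommGroup F] [InnerProductSpace ℝ F] {K : Set F} {u p w : F}

theorem inner_sub_le_zero_of_forall_norm_sub_le (hK : Convex ℝ K) (hp : p ∈ K)
    (hmin : ∀ w ∈ K, ‖u - p‖ ≤ ‖u - w‖) (hw : w ∈ K) : ⟪u - p, w - p⟫ ≤ 0 := by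
  have : Nonempty K := ⟨⟨p, hp⟩⟩
  refine (norm_eq_iInf_iff_real_inner_le_zero hK hp).mp ?_ w hw
  exact le_antisymm (le_ciInf fun w => hmin w w.2)
    (ciInf_le ⟨0, fun _ ⟨_, h⟩ => h ▸ norm_nonneg _⟩ (⟨p, hp⟩ : K))

theorem norm_sub_le_of_forall_norm_sub_le (hK : Convex ℝ K) (hp : p ∈ K)
    (hmin : ∀ w ∈ K, ‖u - p‖ ≤ ‖u - w‖) (hw : w ∈ K) : ‖p - w‖ ≤ ‖u - w‖ := by
  have hangle := inner_sub_le_zero_of_forall_norm_sub_le hK hp hmin hw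
  have hexpand : ‖u - w‖ ^ 2 = ‖u - p‖ ^ 2 - 2 * ⟪u - p, w - p⟫ + ‖p - w‖ ^ 2 := by
    rw [← sub_add_sub_cancel u p w, norm_add_sq_real, ← neg_sub w p, inner_neg_right]
    ring
  refine (pow_le_pow_iff_left₀ (norm_nonneg _) (norm_nonneg _) two_ne_zero).mp ?_
  nlinarith [sq_nonneg ‖u - p‖]

end Projection

theorem norm_sub_smul_sub_sq_le_s9 {F : Type*} [NormedAddCommGroup F] [InnerProductSpace ℝ F]
    {L β a : ℝ} {g v w : F} (hL : 0 < L) (hβ : 0 ≤ β)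
    (hinner : a ≤ ⟪g, v - w⟫) (hg : ‖g‖ ^ 2 ≤ 2 * L * a) :
    ‖v - (β / L) • g - w‖ ^ 2 ≤ ‖v - w‖ ^ 2 - 2 * β * (1 - β) / L * a := by
  have hexpand : ‖v - (β / L) • g - w‖ ^ 2
      = ‖v - w‖ ^ 2 - 2 * (β / L) * ⟪g, v - w⟫ + (β / L) ^ 2 * ‖g‖ ^ 2 := by
    rw [sub_right_comm, norm_sub_sq_real, real_inner_smul_right, norm_smul, mul_pow,
      Real.norm_eq_abs, sq_abs, real_inner_comm]
    ring
  have hstep : 0 ≤ β / L := by positivity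
  calc ‖v - (β / L) • g - w‖ ^ 2
      ≤ ‖v - w‖ ^ 2 - 2 * (β / L) * a + (β / L) ^ 2 * (2 * L * a) := by
        rw [hexpand]; gcongr
    _ = ‖v - w‖ ^ 2 - 2 * β * (1 - β) / L * a := by field_simp; ring

theorem sq_norm_gradient_le_of_ballRadius_nonpos {n : ℕ} {h : EuclideanSpace ℝ (Fin n) → ℝ}
    {L : ℝ} {v : EuclideanSpace ℝ (Fin n)} (hL : 0 < L) (hR : ballRadius h L v ≤ 0) :
    ‖gradient h v‖ ^ 2 ≤ 2 * L * h v := by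
  have hR' : ‖gradient h v‖ ^ 2 / L ^ 2 ≤ 2 * h v / L := sub_nonpos.mp hR
  rw [div_le_div_iff₀ (by positivity) hL, pow_two L, ← mul_assoc,
    mul_le_mul_iff_of_pos_right hL] at hR'
  linear_combination hR'

theorem sq_div_le_self {a M : ℝ} (ha : 0 ≤ a) (haM : a ≤ M) : a ^ 2 / M ≤ a :=
  div_le_of_le_mul₀ (ha.trans haM) ha (by rw [sq]; exact mul_le_mul_of_nonneg_left haM ha)

theorem stmt_9_general {n : ℕ} (h : EuclideanSpace ℝ (Fin n) → ℝ)
    (hconv : ConvexOn ℝ Set.univ h) (hdiff : Differentiable ℝ h)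
    (L : ℝ) (hL : 0 < L)
    (Y Xstar : Set (EuclideanSpace ℝ (Fin n)))
    (hYcv : Convex ℝ Y)
    (hXsY : Xstar ⊆ Y)
    (v : EuclideanSpace ℝ (Fin n)) (hv : 0 < h v) (hR : ballRadius h L v ≤ 0)
    -- `vbar = Π_{X*}(v)` : projection of `v` onto `X*`
    (vbar : EuclideanSpace ℝ (Fin n)) (hvbarmem : vbar ∈ Xstar)
    (hfeas : h vbar ≤ 0)
    (β : ℝ) (hβ : β ∈ Set.Ioo (0 : ℝ) 1)
    (Mh : ℝ) (hhbd : h v ≤ Mh)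
    (z : EuclideanSpace ℝ (Fin n))
    (hz : z = v - (β / L) • gradient h v)
    -- `xplus = Π_Y(z)` : projection of `z` onto `Y`
    (xplus : EuclideanSpace ℝ (Fin n)) (hxpmem : xplus ∈ Y)
    (hxpproj : ∀ y ∈ Y, ‖z - xplus‖ ≤ ‖z - y‖) :
    (infDist xplus Xstar) ^ 2
      ≤ ‖v - vbar‖ ^ 2 - 2 * β * (1 - β) / (Mh * L) * (h v) ^ 2 := by
  obtain ⟨hβ0, hβ1⟩ := hβ
  have hinner : h v ≤ ⟪gradient h v, v - vbar⟫ := by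
    have := hconv.inner_gradient_sub_le (Set.mem_univ v) (Set.mem_univ vbar) (hdiff v)
    rw [← neg_sub v vbar, inner_neg_right] at this
    linarith
  have hstep : ‖z - vbar‖ ^ 2 ≤ ‖v - vbar‖ ^ 2 - 2 * β * (1 - β) / L * h v :=
    hz ▸ norm_sub_smul_sub_sq_le_s9 hL hβ0.le hinner (sq_norm_gradient_le_of_ballRadius_nonpos hL hR)
  have hdist : infDist xplus Xstar ≤ ‖z - vbar‖ := calc
    infDist xplus Xstar ≤ ‖xplus - vbar‖ := by
      simpa [dist_eq_norm] using infDist_le_dist_of_mem hvbarmem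
    _ ≤ ‖z - vbar‖ := norm_sub_le_of_forall_norm_sub_le hYcv hxpmem hxpproj (hXsY hvbarmem)
  have hscale : 2 * β * (1 - β) / (Mh * L) * h v ^ 2 ≤ 2 * β * (1 - β) / L * h v := by
    have hcoef : 0 ≤ 2 * β * (1 - β) / L := by have := sub_pos.mpr hβ1; positivity
    calc 2 * β * (1 - β) / (Mh * L) * h v ^ 2 = 2 * β * (1 - β) / L * (h v ^ 2 / Mh) := by ring
      _ ≤ 2 * β * (1 - β) / L * h v := by gcongr; exact sq_div_le_self hv.le hhbd
  calc infDist xplus Xstar ^ 2 ≤ ‖z - vbar‖ ^ 2 := by gcongr; exact infDist_nonneg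
    _ ≤ ‖v - vbar‖ ^ 2 - 2 * β * (1 - β) / (Mh * L) * h v ^ 2 := by linarith

theorem stmt_9 {n : ℕ} (h : EuclideanSpace ℝ (Fin n) → ℝ)
    (hconv : ConvexOn ℝ Set.univ h) (hdiff : Differentiable ℝ h)
    (L : ℝ) (hL : 0 < L)
    (hLip : ∀ x y, ‖gradient h x - gradient h y‖ ≤ L * ‖x - y‖)
    (Y Xstar : Set (EuclideanSpace ℝ (Fin n)))
    (hYne : Y.Nonempty) (hYcl : IsClosed Y) (hYcv : Convex ℝ Y)
    (hXsne : Xstar.Nonempty) (hXscl : IsClosed Xstar) (hXscv : Convex ℝ Xstar)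
    (hXsY : Xstar ⊆ Y)
    (v : EuclideanSpace ℝ (Fin n)) (hv : 0 < h v) (hR : ballRadius h L v ≤ 0)
    -- `vbar = Π_{X*}(v)` : projection of `v` onto `X*`
    (vbar : EuclideanSpace ℝ (Fin n)) (hvbarmem : vbar ∈ Xstar)
    (hvbarproj : ∀ y ∈ Xstar, ‖v - vbar‖ ≤ ‖v - y‖)
    (hfeas : h vbar ≤ 0)
    (β : ℝ) (hβ : β ∈ Set.Ioo (0 : ℝ) 1)
    (Mh : ℝ) (hMh : 0 < Mh) (hhbd : h v ≤ Mh)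
    (z : EuclideanSpace ℝ (Fin n))
    (hz : z = v - (β / L) • gradient h v)
    -- `xplus = Π_Y(z)` : projection of `z` onto `Y`
    (xplus : EuclideanSpace ℝ (Fin n)) (hxpmem : xplus ∈ Y)
    (hxpproj : ∀ y ∈ Y, ‖z - xplus‖ ≤ ‖z - y‖) :
    (infDist xplus Xstar) ^ 2
      ≤ ‖v - vbar‖ ^ 2 - 2 * β * (1 - β) / (Mh * L) * (h v) ^ 2 :=
  stmt_9_general h hconv hdiff L hL Y Xstar hYcv hXsY v hv hR vbar hvbarmem hfeas β hβ Mh hhbd z hz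
    xplus hxpmem hxpproj
end

section
/- Let f : ℝⁿ → ℝ be convex, let Y ⊆ ℝⁿ be nonempty closed convex, let x ∈ Y and x̄ ∈ Y, let α ≥ 0, and let g ∈ ℝⁿ be a subgradient of f at x (i.e., f(y) ≥ f(x) + ⟨g, y − x⟩ for all y ∈ Y) with ‖g‖ ≤ B_f for some B_f ≥ 0. Then ‖Π_Y(x − α·g) − x̄‖² ≤ ‖x − x̄‖² − 2α·(f(x) − f(x̄)) + B_f²·α². -/
open scoped RealInnerProductSpace

set_option maxHeartbeats 1000000 in
theorem stmt_12 {n : ℕ} (f : EuclideanSpace ℝ (Fin n) → ℝ)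
    (hf : ConvexOn ℝ Set.univ f)
    (Y : Set (EuclideanSpace ℝ (Fin n)))
    (hYne : Y.Nonempty) (hYcl : IsClosed Y) (hYcv : Convex ℝ Y)
    (x xbar : EuclideanSpace ℝ (Fin n)) (hx : x ∈ Y) (hxbar : xbar ∈ Y)
    (α : ℝ) (hα : 0 ≤ α)
    (g : EuclideanSpace ℝ (Fin n))
    -- `g` is a subgradient of `f` at `x`
    (hsub : ∀ y ∈ Y, f x + ⟪g, y - x⟫ ≤ f y)
    (Bf : ℝ) (hBf : 0 ≤ Bf) (hg : ‖g‖ ≤ Bf)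
    -- `w = Π_Y(x - α g)` : projection of `x - α g` onto `Y`
    (w : EuclideanSpace ℝ (Fin n)) (hwmem : w ∈ Y)
    (hwproj : ∀ y ∈ Y, ‖x - α • g - w‖ ≤ ‖x - α • g - y‖) :
    ‖w - xbar‖ ^ 2 ≤ ‖x - xbar‖ ^ 2 - 2 * α * (f x - f xbar) + Bf ^ 2 * α ^ 2 := by
  have hne : Nonempty ↑Y := hYne.to_subtype
  set z := x - α • g with hz
  have hinf : ‖z - w‖ = ⨅ y : Y, ‖z - y‖ := by
    refine le_antisymm (le_ciInf fun y => hwproj y y.2) ?_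
    have hbdd : BddBelow (Set.range fun y : Y => ‖z - (y : EuclideanSpace ℝ (Fin n))‖) := by
      refine ⟨0, ?_⟩
      rintro a ⟨y, rfl⟩
      exact norm_nonneg _
    exact ciInf_le hbdd ⟨w, hwmem⟩
  have hVI := (norm_eq_iInf_iff_real_inner_le_zero hYcv hwmem).mp hinf
  have hVIx := hVI xbar hxbar
  have h1 : ‖w - xbar‖ ^ 2 ≤ ‖z - xbar‖ ^ 2 := by
    have hdecomp : z - xbar = (z - w) + (w - xbar) := by abel
    rw [hdecomp, norm_add_sq_real]
    have : ⟪z - w, w - xbar⟫ = -⟪z - w, xbar - w⟫ := by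
      rw [← inner_neg_right]; congr 1; abel
    nlinarith [norm_nonneg (z - w), sq_nonneg (‖z - w‖)]
  have h2 : ‖z - xbar‖ ^ 2 = ‖x - xbar‖ ^ 2 - 2 * α * ⟪g, x - xbar⟫ + α ^ 2 * ‖g‖ ^ 2 := by
    have hdecomp : z - xbar = (x - xbar) - α • g := by rw [hz]; abel
    rw [hdecomp, norm_sub_sq_real, norm_smul, inner_smul_right, real_inner_comm]
    simp [abs_of_nonneg hα]
    ring
  have h3 : f x - f xbar ≤ ⟪g, x - xbar⟫ := by
    have := hsub xbar hxbar
    have he : ⟪g, xbar - x⟫ = -⟪g, x - xbar⟫ := by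
      rw [← inner_neg_right]; congr 1; abel
    linarith [he ▸ this]
  have h4 : α ^ 2 * ‖g‖ ^ 2 ≤ Bf ^ 2 * α ^ 2 := by
    have hsq : ‖g‖ ^ 2 ≤ Bf ^ 2 := pow_le_pow_left₀ (norm_nonneg g) hg 2
    nlinarith [sq_nonneg α]
  nlinarith [mul_le_mul_of_nonneg_left h3 hα]
end

section
/- (Theorem 1 of the paper, convex case.) Let (Ω', 𝓖, μ) be a probability space, let X ⊆ ℝⁿ be nonempty closed convex, let X* ⊆ X be nonempty closed convex, and let f : ℝⁿ → ℝ be convex with f(y) = f* for every y ∈ X*. Let β ∈ (0,1), c > 0, 𝓑 > 0 and B_f ≥ 0; set γ = β(1 − β)/(c·𝓑²) and C = (1 + 2β(1 − β)/(c·𝓑²))·B_f². Let (α_t)_{t≥0} be positive and non-increasing, let x_0 ∈ ℝⁿ be deterministic, and let (x_t)_{t≥0} be random vectors in ℝⁿ (with all quantities appearing below measurable and integrable) satisfying, for every t ≥ 0, E[dist²(x_{t+1}, X*)] ≤ E[dist²(x_t, X*)] − 2α_t·E[f(x_t) − f*] − γ·E[dist²(x_t, X)] + C·α_t². For k ≥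 1 set S_k = Σ_{t=0}^{k−1} α_t and x̂_k = (1/S_k)·Σ_{t=0}^{k−1} α_t·x_t. Then: (i) E[f(x̂_k)] − f* ≤ dist²(x_0, X*)/(2S_k) + C·(Σ_{t=0}^{k−1} α_t²)/(2S_k); and (ii) 2·(E[f(x̂_k)] − f*) + (γ/α_0)·E[dist²(x̂_k, X)] ≤ dist²(x_0, X*)/S_k + C·(Σ_{t=0}^{k−1} α_t²)/S_k. -/
/-!
Summing the per-step recurrence telescopes the squared distances to `X*`, leaving
`Σ_t (2 α_t E[f(x_t) - f*] + γ E[dist²(x_t, X)]) ≤ dist²(x₀, X*) + C Σ_t α_t²`.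
Since `α_t ≤ α_0`, the left side dominates `S_k` times the `α`-weighted average of
`2 E[f(x_t) - f*] + (γ/α_0) E[dist²(x_t, X)]`, and Jensen's inequality for the convex functions
`f` and `dist²(·, X)` (the distance to a convex set is convex) bounds that average from below
by the same expression evaluated at `x̂_k`.
-/

open Metric MeasureTheory

/-- The weighted average iterate `x̂_k = (1/S_k) Σ_{t<k} α_t x_t` where
`S_k = Σ_{t<k} α_t`. -/
noncomputable def avgIter {n : ℕ} {Ω' : Type*} (α : ℕ → ℝ)
    (x : ℕ → Ω' → EuclideanSpace ℝ (Fin n)) (k : ℕ) (ω : Ω') :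
    EuclideanSpace ℝ (Fin n) :=
  (∑ t ∈ Finset.range k, α t)⁻¹ • ∑ t ∈ Finset.range k, α t • x t ω

open Set

section Convexity

variable {E : Type*} [SeminormedAddCommGroup E] [NormedSpace ℝ E] {s : Set E}

theorem convexOn_univ_infDist (hs : Convex ℝ s) : ConvexOn ℝ univ fun x => infDist x s := by
  refine ⟨convex_univ, fun x _ y _ a b ha hb hab => ?_⟩
  rcases s.eq_empty_or_nonempty with rfl | hne
  · simp
  refine le_of_forall_pos_le_add fun ε hε => ?_
  obtain ⟨p, hp, hxp⟩ := (infDist_lt_iff hne).1 (lt_add_of_pos_right (infDist x s) hε)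
  obtain ⟨q, hq, hyq⟩ := (infDist_lt_iff hne).1 (lt_add_of_pos_right (infDist y s) hε)
  calc infDist (a • x + b • y) s ≤ dist (a • x + b • y) (a • p + b • q) :=
        infDist_le_dist_of_mem (hs hp hq ha hb hab)
    _ ≤ a * dist x p + b * dist y q := by
        refine (dist_add_add_le _ _ _ _).trans_eq ?_
        rw [dist_smul₀, dist_smul₀, Real.norm_of_nonneg ha, Real.norm_of_nonneg hb]
    _ ≤ a * (infDist x s + ε) + b * (infDist y s + ε) := by gcongr
    _ = a • infDist x s + b • infDist y s + ε := by
        rw [smul_eq_mul, smul_eq_mul]; linear_combination ε * hab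

theorem convexOn_univ_infDist_sq (hs : Convex ℝ s) :
    ConvexOn ℝ univ fun x => infDist x s ^ 2 :=
  (convexOn_univ_infDist hs).pow (fun _ _ => infDist_nonneg) 2

end Convexity

theorem ConvexOn.integral_comp_centerMass_le {Ω E ι : Type*} [MeasurableSpace Ω] {μ : Measure Ω}
    [AddCommGroup E] [Module ℝ E] {g : E → ℝ} (hg : ConvexOn ℝ univ g)
    {s : Finset ι} {w : ι → ℝ} (hw : ∀ i ∈ s, 0 ≤ w i) (hws : 0 < ∑ i ∈ s, w i)
    {Y : ι → Ω → E} (hY : ∀ i ∈ s, Integrable (fun ω => g (Y i ω)) μ)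
    (hYmass : Integrable (fun ω => g (s.centerMass w fun i => Y i ω)) μ) :
    ∫ ω, g (s.centerMass w fun i => Y i ω) ∂μ ≤ s.centerMass w fun i => ∫ ω, g (Y i ω) ∂μ := by
  have hwY : ∀ i ∈ s, Integrable (fun ω => w i * g (Y i ω)) μ :=
    fun i hi => (hY i hi).const_mul (w i)
  calc ∫ ω, g (s.centerMass w fun i => Y i ω) ∂μ
      ≤ ∫ ω, s.centerMass w (fun i => g (Y i ω)) ∂μ := by
        refine integral_mono hYmass ?_ fun ω => hg.map_centerMass_le hw hws fun _ _ => mem_univ _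
        simpa only [Finset.centerMass, smul_eq_mul] using
          (integrable_finsetSum s hwY).const_mul _
    _ = s.centerMass w fun i => ∫ ω, g (Y i ω) ∂μ := by
        simp only [Finset.centerMass, smul_eq_mul]
        rw [integral_const_mul, integral_finsetSum s hwY]
        simp_rw [integral_const_mul]

theorem sum_range_le_of_le_sub_add {a b c : ℕ → ℝ} (ha : ∀ t, 0 ≤ a t)
    (h : ∀ t, a (t + 1) ≤ a t - b t + c t) (k : ℕ) :
    ∑ t ∈ Finset.range k, b t ≤ a 0 + ∑ t ∈ Finset.range k, c t := by
  suffices a k + ∑ t ∈ Finset.range k, b t ≤ a 0 + ∑ t ∈ Finset.range k, c t by linarith [ha k]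
  induction k with
  | zero => simp
  | succ k ih =>
    rw [Finset.sum_range_succ, Finset.sum_range_succ]
    linarith [h k, ha k]

theorem mul_centerMass_eq_sum {ι : Type*} {s : Finset ι} {w z : ι → ℝ}
    (hws : ∑ i ∈ s, w i ≠ 0) : (∑ i ∈ s, w i) * s.centerMass w z = ∑ i ∈ s, w i * z i := by
  simp only [Finset.centerMass, smul_eq_mul, mul_inv_cancel_left₀ hws]

section WeightedAverage

variable {Ω E ι : Type*} [MeasurableSpace Ω] {μ : Measure Ω} {s : Finset ι} {w : ι → ℝ}
  {Y : ι → Ω → E}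

theorem ConvexOn.mul_integral_comp_centerMass_sub_le [IsProbabilityMeasure μ] [AddCommGroup E]
    [Module ℝ E] {g : E → ℝ} (hg : ConvexOn ℝ univ g) (hw : ∀ i ∈ s, 0 ≤ w i)
    (hws : 0 < ∑ i ∈ s, w i) (hY : ∀ i ∈ s, Integrable (fun ω => g (Y i ω)) μ)
    (hYmass : Integrable (fun ω => g (s.centerMass w fun i => Y i ω)) μ) (b : ℝ) :
    (∑ i ∈ s, w i) * (∫ ω, g (s.centerMass w fun i => Y i ω) ∂μ - b)
      ≤ ∑ i ∈ s, w i * ∫ ω, (g (Y i ω) - b) ∂μ := by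
  have hgb : ConvexOn ℝ univ fun y => g y - b := hg.sub (concaveOn_const b convex_univ)
  have hshift : ∫ ω, (g (s.centerMass w fun i => Y i ω) - b) ∂μ
      = ∫ ω, g (s.centerMass w fun i => Y i ω) ∂μ - b := by
    simp [integral_sub hYmass (integrable_const b)]
  rw [← hshift, ← mul_centerMass_eq_sum hws.ne']
  gcongr
  exact hgb.integral_comp_centerMass_le hw hws (fun i hi => (hY i hi).sub (integrable_const b))
    (hYmass.sub (integrable_const b))

theorem mul_integral_infDist_centerMass_sq_le [SeminormedAddCommGroup E] [NormedSpace ℝ E]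
    {X : Set E} (hX : Convex ℝ X) (hw : ∀ i ∈ s, 0 ≤ w i) (hws : 0 < ∑ i ∈ s, w i) {a : ℝ}
    (hwa : ∀ i ∈ s, w i ≤ a) (hY : ∀ i ∈ s, Integrable (fun ω => infDist (Y i ω) X ^ 2) μ)
    (hYmass : Integrable (fun ω => infDist (s.centerMass w fun i => Y i ω) X ^ 2) μ) :
    (∑ i ∈ s, w i) * ∫ ω, infDist (s.centerMass w fun i => Y i ω) X ^ 2 ∂μ
      ≤ a * ∑ i ∈ s, ∫ ω, infDist (Y i ω) X ^ 2 ∂μ := by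
  calc _ ≤ ∑ i ∈ s, w i * ∫ ω, infDist (Y i ω) X ^ 2 ∂μ := by
        rw [← mul_centerMass_eq_sum hws.ne']
        gcongr
        exact (convexOn_univ_infDist_sq hX).integral_comp_centerMass_le hw hws hY hYmass
    _ ≤ a * ∑ i ∈ s, ∫ ω, infDist (Y i ω) X ^ 2 ∂μ := by
        rw [Finset.mul_sum]
        gcongr with i hi
        exact hwa i hi

end WeightedAverage

theorem stmt_14_general {n : ℕ} {Ω' : Type*} [MeasurableSpace Ω']
    (μ : Measure Ω') [IsProbabilityMeasure μ]
    (X Xstar : Set (EuclideanSpace ℝ (Fin n)))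
    (hXcv : Convex ℝ X)
    (f : EuclideanSpace ℝ (Fin n) → ℝ) (hf : ConvexOn ℝ Set.univ f)
    (fstar : ℝ)
    (β c B : ℝ) (hβ : β ∈ Set.Ioo (0 : ℝ) 1) (hc : 0 < c)
    (γ C : ℝ) (hγ : γ = β * (1 - β) / (c * B ^ 2))
    (α : ℕ → ℝ) (hαpos : ∀ t, 0 < α t) (hαmono : ∀ t, α (t + 1) ≤ α t)
    (x : ℕ → Ω' → EuclideanSpace ℝ (Fin n))
    (x0 : EuclideanSpace ℝ (Fin n)) (hx0 : ∀ ω, x 0 ω = x0)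
    -- measurability and integrability of all quantities appearing below
    (hInt2 : ∀ t, Integrable (fun ω => f (x t ω)) μ)
    (hInt3 : ∀ t, Integrable (fun ω => (infDist (x t ω) X) ^ 2) μ)
    (hInt4 : ∀ k, Integrable (fun ω => f (avgIter α x k ω)) μ)
    (hInt5 : ∀ k, Integrable (fun ω => (infDist (avgIter α x k ω) X) ^ 2) μ)
    -- the per-step recurrence (Lemma 5 of the paper)
    (hrec : ∀ t, ∫ ω, (infDist (x (t + 1) ω) Xstar) ^ 2 ∂μ
        ≤ ∫ ω, (infDist (x t ω) Xstar) ^ 2 ∂μ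
          - 2 * α t * ∫ ω, (f (x t ω) - fstar) ∂μ
          - γ * ∫ ω, (infDist (x t ω) X) ^ 2 ∂μ + C * α t ^ 2) :
    ∀ k : ℕ, 1 ≤ k →
      ((∫ ω, f (avgIter α x k ω) ∂μ) - fstar
          ≤ (infDist x0 Xstar) ^ 2 / (2 * ∑ t ∈ Finset.range k, α t)
            + C * (∑ t ∈ Finset.range k, α t ^ 2)
                / (2 * ∑ t ∈ Finset.range k, α t)) ∧
      (2 * ((∫ ω, f (avgIter α x k ω) ∂μ) - fstar)
          + γ / α 0 * ∫ ω, (infDist (avgIter α x k ω) X) ^ 2 ∂μ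
        ≤ (infDist x0 Xstar) ^ 2 / (∑ t ∈ Finset.range k, α t)
          + C * (∑ t ∈ Finset.range k, α t ^ 2) / (∑ t ∈ Finset.range k, α t)) := by
  intro k hk
  set S := ∑ t ∈ Finset.range k, α t
  have hS : 0 < S := Finset.sum_pos (fun t _ => hαpos t) (Finset.nonempty_range_iff.2 (by omega))
  have hw : ∀ t ∈ Finset.range k, 0 ≤ α t := fun t _ => (hαpos t).le
  have hγ0 : 0 ≤ γ / α 0 := div_nonneg
    (hγ ▸ div_nonneg (mul_nonneg hβ.1.le (sub_nonneg.2 hβ.2.le)) (by positivity)) (hαpos 0).le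
  have htel := sum_range_le_of_le_sub_add (a := fun t => ∫ ω, infDist (x t ω) Xstar ^ 2 ∂μ)
    (fun t => integral_nonneg fun _ => sq_nonneg _)
    (b := fun t => 2 * α t * ∫ ω, (f (x t ω) - fstar) ∂μ + γ * ∫ ω, infDist (x t ω) X ^ 2 ∂μ)
    (c := fun t => C * α t ^ 2) (fun t => by linarith [hrec t]) k
  simp only [hx0, integral_const, probReal_univ, one_smul, Finset.sum_add_distrib, mul_assoc,
    ← Finset.mul_sum] at htel
  have hf_avg : S * ((∫ ω, f (avgIter α x k ω) ∂μ) - fstar) ≤ _ :=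
    hf.mul_integral_comp_centerMass_sub_le hw hS (fun t _ => hInt2 t) (hInt4 k) fstar
  have hd_avg : S * ∫ ω, infDist (avgIter α x k ω) X ^ 2 ∂μ ≤ _ :=
    mul_integral_infDist_centerMass_sq_le hXcv hw hS
      (fun t _ => antitone_nat_of_succ_le hαmono (Nat.zero_le t)) (fun t _ => hInt3 t) (hInt5 k)
  have key : S * (2 * ((∫ ω, f (avgIter α x k ω) ∂μ) - fstar)
      + γ / α 0 * ∫ ω, infDist (avgIter α x k ω) X ^ 2 ∂μ)
      ≤ infDist x0 Xstar ^ 2 + C * ∑ t ∈ Finset.range k, α t ^ 2 := by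
    have hγ_avg := mul_le_mul_of_nonneg_left hd_avg hγ0
    rw [← mul_assoc (γ / α 0) (α 0), div_mul_cancel₀ γ (hαpos 0).ne'] at hγ_avg
    linarith
  have hd_nonneg : 0 ≤ ∫ ω, infDist (avgIter α x k ω) X ^ 2 ∂μ :=
    integral_nonneg fun _ => sq_nonneg _
  refine ⟨?_, ?_⟩
  · rw [← add_div, le_div_iff₀ (by positivity)]
    nlinarith [mul_nonneg hS.le (mul_nonneg hγ0 hd_nonneg)]
  · rw [← add_div, le_div_iff₀ hS]
    linarith

theorem stmt_14 {n : ℕ} {Ω' : Type*} [MeasurableSpace Ω']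
    (μ : Measure Ω') [IsProbabilityMeasure μ]
    (X Xstar : Set (EuclideanSpace ℝ (Fin n)))
    (hXne : X.Nonempty) (hXcl : IsClosed X) (hXcv : Convex ℝ X)
    (hXsne : Xstar.Nonempty) (hXscl : IsClosed Xstar) (hXscv : Convex ℝ Xstar)
    (hXsX : Xstar ⊆ X)
    (f : EuclideanSpace ℝ (Fin n) → ℝ) (hf : ConvexOn ℝ Set.univ f)
    (fstar : ℝ) (hfstar : ∀ y ∈ Xstar, f y = fstar)
    (β c B Bf : ℝ) (hβ : β ∈ Set.Ioo (0 : ℝ) 1) (hc : 0 < c) (hB : 0 < B)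
    (hBf : 0 ≤ Bf)
    (γ C : ℝ) (hγ : γ = β * (1 - β) / (c * B ^ 2))
    (hC : C = (1 + 2 * β * (1 - β) / (c * B ^ 2)) * Bf ^ 2)
    (α : ℕ → ℝ) (hαpos : ∀ t, 0 < α t) (hαmono : ∀ t, α (t + 1) ≤ α t)
    (x : ℕ → Ω' → EuclideanSpace ℝ (Fin n))
    (x0 : EuclideanSpace ℝ (Fin n)) (hx0 : ∀ ω, x 0 ω = x0)
    -- measurability and integrability of all quantities appearing below
    (hmeas : ∀ t, Measurable (x t))
    (hInt1 : ∀ t, Integrable (fun ω => (infDist (x t ω) Xstar) ^ 2) μ)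
    (hInt2 : ∀ t, Integrable (fun ω => f (x t ω)) μ)
    (hInt3 : ∀ t, Integrable (fun ω => (infDist (x t ω) X) ^ 2) μ)
    (hInt4 : ∀ k, Integrable (fun ω => f (avgIter α x k ω)) μ)
    (hInt5 : ∀ k, Integrable (fun ω => (infDist (avgIter α x k ω) X) ^ 2) μ)
    -- the per-step recurrence (Lemma 5 of the paper)
    (hrec : ∀ t, ∫ ω, (infDist (x (t + 1) ω) Xstar) ^ 2 ∂μ
        ≤ ∫ ω, (infDist (x t ω) Xstar) ^ 2 ∂μ
          - 2 * α t * ∫ ω, (f (x t ω) - fstar) ∂μ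
          - γ * ∫ ω, (infDist (x t ω) X) ^ 2 ∂μ + C * α t ^ 2) :
    ∀ k : ℕ, 1 ≤ k →
      ((∫ ω, f (avgIter α x k ω) ∂μ) - fstar
          ≤ (infDist x0 Xstar) ^ 2 / (2 * ∑ t ∈ Finset.range k, α t)
            + C * (∑ t ∈ Finset.range k, α t ^ 2)
                / (2 * ∑ t ∈ Finset.range k, α t)) ∧
      (2 * ((∫ ω, f (avgIter α x k ω) ∂μ) - fstar)
          + γ / α 0 * ∫ ω, (infDist (avgIter α x k ω) X) ^ 2 ∂μ
        ≤ (infDist x0 Xstar) ^ 2 / (∑ t ∈ Finset.range k, α t)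
          + C * (∑ t ∈ Finset.range k, α t ^ 2) / (∑ t ∈ Finset.range k, α t)) :=
  stmt_14_general μ X Xstar hXcv f hf fstar β c B hβ hc γ C hγ α hαpos hαmono x x0 hx0 hInt2 hInt3
    hInt4 hInt5 hrec
end

section
/- Let f : ℝⁿ → ℝ, let Y ⊆ ℝⁿ be nonempty closed convex, let X ⊆ Y be nonempty closed convex, let μ > 0, and let x* ∈ Y. Let x ∈ Y and set w = Π_X(x). Let g ∈ ℝⁿ satisfy the strong-convexity subgradient inequality f(y) ≥ f(x) + ⟨g, y − x⟩ + (μ/2)‖y − x‖² for all y ∈ Y, with ‖g‖ ≤ B_f, and let ḡ ∈ ℝⁿ be a subgradient of f at w (i.e., f(y) ≥ f(w) + ⟨ḡ, y − w⟩ for all y ∈ Y) with ‖ḡ‖ ≤ B̄_f. Then for any α ≥ 0 and any η > 0: ‖Π_Y(x − α·g) − x*‖² ≤ (1 − μα)‖x − x*‖² − 2α·(f(w) − f(x*)) + η·‖x − w‖² + (B̄_f²/η + B_f²)·α². -/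
open scoped RealInnerProductSpace

set_option maxHeartbeats 1000000 in
theorem stmt_16 {n : ℕ} (f : EuclideanSpace ℝ (Fin n) → ℝ)
    (Y X : Set (EuclideanSpace ℝ (Fin n)))
    (hYne : Y.Nonempty) (hYcl : IsClosed Y) (hYcv : Convex ℝ Y)
    (hXne : X.Nonempty) (hXcl : IsClosed X) (hXcv : Convex ℝ X)
    (hXY : X ⊆ Y)
    (μ : ℝ) (hμ : 0 < μ)
    (xstar : EuclideanSpace ℝ (Fin n)) (hxstar : xstar ∈ Y)
    (x : EuclideanSpace ℝ (Fin n)) (hx : x ∈ Y)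
    -- `w = Π_X(x)` : projection of `x` onto `X`
    (w : EuclideanSpace ℝ (Fin n)) (hwmem : w ∈ X)
    (hwproj : ∀ y ∈ X, ‖x - w‖ ≤ ‖x - y‖)
    -- strong-convexity subgradient inequality at `x`
    (g : EuclideanSpace ℝ (Fin n))
    (hsg : ∀ y ∈ Y, f x + ⟪g, y - x⟫ + (μ / 2) * ‖y - x‖ ^ 2 ≤ f y)
    (Bf : ℝ) (hg : ‖g‖ ≤ Bf)
    -- subgradient of `f` at `w`
    (gbar : EuclideanSpace ℝ (Fin n))
    (hsgbar : ∀ y ∈ Y, f w + ⟪gbar, y - w⟫ ≤ f y)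
    (Bbarf : ℝ) (hgbar : ‖gbar‖ ≤ Bbarf)
    (α : ℝ) (hα : 0 ≤ α) (η : ℝ) (hη : 0 < η)
    -- `u = Π_Y(x - α g)` : projection of `x - α g` onto `Y`
    (u : EuclideanSpace ℝ (Fin n)) (humem : u ∈ Y)
    (huproj : ∀ y ∈ Y, ‖x - α • g - u‖ ≤ ‖x - α • g - y‖) :
    ‖u - xstar‖ ^ 2
      ≤ (1 - μ * α) * ‖x - xstar‖ ^ 2 - 2 * α * (f w - f xstar)
        + η * ‖x - w‖ ^ 2 + (Bbarf ^ 2 / η + Bf ^ 2) * α ^ 2 := by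
  set z := x - α • g with hz
  -- variational inequality for the projection onto Y
  haveI : Nonempty ↑Y := ⟨⟨u, humem⟩⟩
  have hbdd : BddBelow (Set.range fun y : Y => ‖z - (y : EuclideanSpace ℝ (Fin n))‖) := by
    refine ⟨0, ?_⟩
    rintro r ⟨y, rfl⟩
    exact norm_nonneg _
  have hinf : ‖z - u‖ = ⨅ y : Y, ‖z - y‖ := by
    apply le_antisymm
    · exact le_ciInf fun y => huproj y y.2
    · exact ciInf_le hbdd ⟨u, humem⟩
  have hvi : ⟪z - u, xstar - u⟫ ≤ 0 :=
    ((norm_eq_iInf_iff_real_inner_le_zero hYcv humem).mp hinf) xstar hxstar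
  -- step 1: ‖u - xstar‖² ≤ ‖z - xstar‖²
  have hexp : ‖z - xstar‖ ^ 2
      = ‖z - u‖ ^ 2 + 2 * ⟪z - u, u - xstar⟫ + ‖u - xstar‖ ^ 2 := by
    have : z - xstar = (z - u) + (u - xstar) := by abel
    rw [this, norm_add_sq_real]
  have huinner : 0 ≤ ⟪z - u, u - xstar⟫ := by
    have : u - xstar = -(xstar - u) := by abel
    rw [this, inner_neg_right]; linarith
  have step1 : ‖u - xstar‖ ^ 2 ≤ ‖z - xstar‖ ^ 2 := by
    nlinarith [sq_nonneg ‖z - u‖]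
  -- step 2: expand ‖z - xstar‖²
  have hexp2 : ‖z - xstar‖ ^ 2
      = ‖x - xstar‖ ^ 2 - 2 * (α * ⟪g, x - xstar⟫) + α ^ 2 * ‖g‖ ^ 2 := by
    have h1 : z - xstar = (x - xstar) - α • g := by rw [hz]; abel
    rw [h1, norm_sub_sq_real, real_inner_smul_right, real_inner_comm, norm_smul, mul_pow,
      Real.norm_eq_abs, sq_abs]
  -- strong convexity at x applied to xstar
  have hsc := hsg xstar hxstar
  have hsc' : ⟪g, xstar - x⟫ = -⟪g, x - xstar⟫ := by
    have : xstar - x = -(x - xstar) := by abel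
    rw [this, inner_neg_right]
  have hnrev : ‖xstar - x‖ = ‖x - xstar‖ := norm_sub_rev _ _
  -- subgradient at w applied to x
  have hsw := hsgbar x hx
  have hcs : -(‖gbar‖ * ‖x - w‖) ≤ ⟪gbar, x - w⟫ :=
    neg_le_of_abs_le (abs_real_inner_le_norm _ _)
  -- bounds on norms
  have hBf : 0 ≤ Bf := le_trans (norm_nonneg _) hg
  have hBbf : 0 ≤ Bbarf := le_trans (norm_nonneg _) hgbar
  have hg2 : ‖g‖ ^ 2 ≤ Bf ^ 2 := by nlinarith [norm_nonneg g]
  have hgbar2 : ‖gbar‖ ^ 2 ≤ Bbarf ^ 2 := by nlinarith [norm_nonneg gbar]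
  -- Young's inequality
  have hyoung : 2 * α * ‖gbar‖ * ‖x - w‖ ≤ η * ‖x - w‖ ^ 2 + α ^ 2 * ‖gbar‖ ^ 2 / η := by
    have hdiv : η * (α ^ 2 * ‖gbar‖ ^ 2 / η) = α ^ 2 * ‖gbar‖ ^ 2 := by
      field_simp
    nlinarith [sq_nonneg (η * ‖x - w‖ - α * ‖gbar‖), hη, hdiv]
  have hyoung2 : α ^ 2 * ‖gbar‖ ^ 2 / η ≤ α ^ 2 * Bbarf ^ 2 / η := by
    gcongr
  -- combine
  have key1 : ‖u - xstar‖ ^ 2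
      ≤ (1 - μ * α) * ‖x - xstar‖ ^ 2 - 2 * α * (f x - f xstar) + α ^ 2 * Bf ^ 2 := by
    rw [hsc', hnrev] at hsc
    nlinarith [mul_nonneg hα (sq_nonneg ‖x - xstar‖), sq_nonneg α]
  have key2 : -(2 * α * (f x - f xstar))
      ≤ -(2 * α * (f w - f xstar)) + 2 * α * ‖gbar‖ * ‖x - w‖ := by
    nlinarith [mul_nonneg hα (sub_nonneg.mpr (le_trans hcs (by linarith : ⟪gbar, x - w⟫ ≤ ⟪gbar, x - w⟫)))]
  have : Bbarf ^ 2 / η * α ^ 2 = α ^ 2 * Bbarf ^ 2 / η := by ring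
  nlinarith [key1, key2, hyoung, hyoung2]
end

section
/- (Theorem 2 of the paper, strongly convex case, with explicit constants.) Let (Ω', 𝓖, μ') be a probability space, let X ⊆ ℝⁿ be nonempty closed convex, let x* ∈ X, let μ > 0, γ > 0 and Ĉ > 0. Let (x_k)_{k≥0} be random vectors in ℝⁿ (with all quantities below measurable and integrable) satisfying, for every k ≥ 0 and with α_k = 2/(μ(k+1)): E[‖x_{k+1} − x*‖²] ≤ (1 − μα_k)·E[‖x_k − x*‖²] − μα_k·E[‖Π_X(x_k) − x*‖²] − γ·E[dist²(x_k, X)] + Ĉ·α_k². For k ≥ 1 set S̄_k = Σ_{t=0}^{k−1} (t+1)², x̂_k = (1/S̄_k)·Σ_{t=0}^{k−1} (t+1)²·x_t, and ŵ_k = (1/S̄_k)·Σ_{t=0}^{k−1} (t+1)²·Π_X(x_t). Then: (i) E[‖ŵ_k − x*‖²] ≤ 2Ĉ·k·(k+1)/(μ²·S̄_k); (ii) E[dist²(x̂_k, X)] ≤ E[‖x̂_k − ŵ_k‖²] ≤ 4Ĉ·k/(γ·μ²·S̄_k); and (iii) E[‖x̂_k − x*‖²] ≤ 4Ĉ·k·(k+1)/(μ²·S̄_k)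 + 8Ĉ·k/(γ·μ²·S̄_k). In particular, E[‖x̂_k − x*‖²] = O(1/k) and E[dist²(x̂_k, X)] = O(1/k²). -/
/-!
Multiplying the recurrence at step `t` by `(t+1)²` makes it telescope, because
`(t+1)² (1 - μ α_t) = t² - 1 ≤ t²`. Summing up bounds `Σ_{t<k} (t+1) E‖Π_X(x_t) - x*‖²` and
`Σ_{t<k} (t+1)² E[dist²(x_t, X)]` by `O(k)`. Jensen's inequality for `‖·‖²` with the weights
`(t+1)²/S̄_k` carries these bounds over to `ŵ_k - x*` and `x̂_k - ŵ_k`. Since `ŵ_k ∈ X` by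
convexity, `dist(x̂_k, X) ≤ ‖x̂_k - ŵ_k‖`, and `(a + b)² ≤ 2a² + 2b²` gives the bound on
`x̂_k - x*`. The rates follow from `6 S̄_k = k(k+1)(2k+1)`.
-/
open Metric MeasureTheory

/-- `S̄_k = Σ_{t<k} (t+1)²`. -/
noncomputable def Sbar (k : ℕ) : ℝ := ∑ t ∈ Finset.range k, ((t : ℝ) + 1) ^ 2

/-- The weighted average `(1/S̄_k) Σ_{t<k} (t+1)² y_t` of a sequence of
(random) vectors. -/
noncomputable def avgIter2 {n : ℕ} {Ω' : Type*}
    (y : ℕ → Ω' → EuclideanSpace ℝ (Fin n)) (k : ℕ) (ω : Ω') :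
    EuclideanSpace ℝ (Fin n) :=
  (Sbar k)⁻¹ • ∑ t ∈ Finset.range k, ((t : ℝ) + 1) ^ 2 • y t ω

open Finset

theorem six_mul_Sbar (k : ℕ) : 6 * Sbar k = k * (k + 1) * (2 * k + 1) := by
  induction k with
  | zero => simp [Sbar]
  | succ m ih =>
    rw [Sbar, sum_range_succ, mul_add, ← Sbar, ih]
    push_cast
    ring

theorem Sbar_pos {k : ℕ} (hk : 1 ≤ k) : 0 < Sbar k := by
  have : (0 : ℝ) < k * (k + 1) * (2 * k + 1) := by
    have : (0 : ℝ) < k := by exact_mod_cast hk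
    positivity
  linarith [six_mul_Sbar k]

theorem mul_succ_div_Sbar_le {k : ℕ} (hk : 1 ≤ k) : (k : ℝ) * (k + 1) / Sbar k ≤ 3 / k := by
  have hk' : (1 : ℝ) ≤ k := by exact_mod_cast hk
  rw [div_le_div_iff₀ (Sbar_pos hk) (by positivity)]
  nlinarith [six_mul_Sbar k]

theorem div_Sbar_le {k : ℕ} (hk : 1 ≤ k) : (k : ℝ) / Sbar k ≤ 3 / k ^ 2 := by
  have hk' : (1 : ℝ) ≤ k := by exact_mod_cast hk
  rw [div_le_div_iff₀ (Sbar_pos hk) (by positivity)]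
  nlinarith [six_mul_Sbar k]

theorem mul_mul_succ_div_mul_Sbar_le {k : ℕ} (hk : 1 ≤ k) {c d : ℝ} (hc : 0 ≤ c) (hd : 0 ≤ d) :
    c * k * (k + 1) / (d * Sbar k) ≤ 3 * c / d / k :=
  calc c * k * (k + 1) / (d * Sbar k) = c / d * (k * (k + 1) / Sbar k) := by ring
    _ ≤ c / d * (3 / k) := mul_le_mul_of_nonneg_left (mul_succ_div_Sbar_le hk) (div_nonneg hc hd)
    _ = 3 * c / d / k := by ring

theorem mul_div_mul_Sbar_le_div_sq {k : ℕ} (hk : 1 ≤ k) {c d : ℝ} (hc : 0 ≤ c) (hd : 0 ≤ d) :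
    c * k / (d * Sbar k) ≤ 3 * c / d / k ^ 2 :=
  calc c * k / (d * Sbar k) = c / d * (k / Sbar k) := by ring
    _ ≤ c / d * (3 / k ^ 2) := mul_le_mul_of_nonneg_left (div_Sbar_le hk) (div_nonneg hc hd)
    _ = 3 * c / d / k ^ 2 := by ring

theorem mul_div_mul_Sbar_le_div {k : ℕ} (hk : 1 ≤ k) {c d : ℝ} (hc : 0 ≤ c) (hd : 0 ≤ d) :
    c * k / (d * Sbar k) ≤ 3 * c / d / k := by
  have hk' : (1 : ℝ) ≤ k := by exact_mod_cast hk
  exact (mul_div_mul_Sbar_le_div_sq hk hc hd).trans <| div_le_div_of_nonneg_left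
    (by positivity) (by positivity) (le_self_pow₀ hk' two_ne_zero)

theorem infDist_eq_norm_sub_of_forall_norm_sub_le {E : Type*} [SeminormedAddCommGroup E]
    {s : Set E} {x w : E} (hw : w ∈ s) (hmin : ∀ y ∈ s, ‖x - w‖ ≤ ‖x - y‖) :
    infDist x s = ‖x - w‖ := by
  refine le_antisymm (dist_eq_norm x w ▸ infDist_le_dist_of_mem hw) ?_
  exact (le_infDist ⟨w, hw⟩).2 fun y hy => dist_eq_norm x y ▸ hmin y hy

theorem integral_norm_sub_sq_le {Ω E : Type*} [MeasurableSpace Ω] [SeminormedAddCommGroup E]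
    {μ : Measure Ω} {f g h : Ω → E} {A B : ℝ}
    (hfh : Integrable (fun ω => ‖f ω - h ω‖ ^ 2) μ)
    (hfg : Integrable (fun ω => ‖f ω - g ω‖ ^ 2) μ)
    (hgh : Integrable (fun ω => ‖g ω - h ω‖ ^ 2) μ)
    (hA : ∫ ω, ‖f ω - g ω‖ ^ 2 ∂μ ≤ A) (hB : ∫ ω, ‖g ω - h ω‖ ^ 2 ∂μ ≤ B) :
    ∫ ω, ‖f ω - h ω‖ ^ 2 ∂μ ≤ 2 * A + 2 * B := by
  have hle : ∀ ω, ‖f ω - h ω‖ ^ 2 ≤ 2 * ‖f ω - g ω‖ ^ 2 + 2 * ‖g ω - h ω‖ ^ 2 := fun ω =>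
    calc ‖f ω - h ω‖ ^ 2 ≤ (‖f ω - g ω‖ + ‖g ω - h ω‖) ^ 2 := by
          gcongr; exact norm_sub_le_norm_sub_add_norm_sub _ _ _
      _ ≤ _ := by linarith [add_sq_le (a := ‖f ω - g ω‖) (b := ‖g ω - h ω‖)]
  calc _ ≤ ∫ ω, (2 * ‖f ω - g ω‖ ^ 2 + 2 * ‖g ω - h ω‖ ^ 2) ∂μ :=
        integral_mono hfh ((hfg.const_mul 2).add (hgh.const_mul 2)) hle
    _ = 2 * ∫ ω, ‖f ω - g ω‖ ^ 2 ∂μ + 2 * ∫ ω, ‖g ω - h ω‖ ^ 2 ∂μ := by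
        rw [integral_add (hfg.const_mul 2) (hgh.const_mul 2), integral_const_mul,
          integral_const_mul]
    _ ≤ 2 * A + 2 * B := by linarith

section WeightedAverage

variable {n : ℕ} {Ω' : Type*} {k : ℕ}

theorem Sbar_weight_nonneg (hk : 1 ≤ k) (t : ℕ) : 0 ≤ (Sbar k)⁻¹ * ((t : ℝ) + 1) ^ 2 :=
  mul_nonneg (inv_nonneg.2 (Sbar_pos hk).le) (sq_nonneg _)

theorem sum_Sbar_weight_eq_one (hk : 1 ≤ k) :
    ∑ t ∈ range k, (Sbar k)⁻¹ * ((t : ℝ) + 1) ^ 2 = 1 := by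
  rw [← mul_sum, ← Sbar, inv_mul_cancel₀ (Sbar_pos hk).ne']

theorem avgIter2_eq_sum (y : ℕ → Ω' → EuclideanSpace ℝ (Fin n)) (k : ℕ) (ω : Ω') :
    avgIter2 y k ω = ∑ t ∈ range k, ((Sbar k)⁻¹ * ((t : ℝ) + 1) ^ 2) • y t ω := by
  simp only [avgIter2, smul_sum, smul_smul]

theorem avgIter2_const (hk : 1 ≤ k) (z : EuclideanSpace ℝ (Fin n)) (ω : Ω') :
    avgIter2 (fun _ _ => z) k ω = z := by
  rw [avgIter2_eq_sum, ← sum_smul, sum_Sbar_weight_eq_one hk, one_smul]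

theorem avgIter2_mem {X : Set (EuclideanSpace ℝ (Fin n))} (hX : Convex ℝ X)
    {y : ℕ → Ω' → EuclideanSpace ℝ (Fin n)} {ω : Ω'} (hy : ∀ t, y t ω ∈ X) (hk : 1 ≤ k) :
    avgIter2 y k ω ∈ X := by
  rw [avgIter2_eq_sum]
  exact hX.sum_mem (fun t _ => Sbar_weight_nonneg hk t) (sum_Sbar_weight_eq_one hk) fun t _ => hy t

theorem norm_avgIter2_sub_sq_le (hk : 1 ≤ k) (y z : ℕ → Ω' → EuclideanSpace ℝ (Fin n))
    (ω : Ω') :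
    ‖avgIter2 y k ω - avgIter2 z k ω‖ ^ 2
      ≤ (Sbar k)⁻¹ * ∑ t ∈ range k, ((t : ℝ) + 1) ^ 2 * ‖y t ω - z t ω‖ ^ 2 := by
  have hconv : ConvexOn ℝ Set.univ fun v : EuclideanSpace ℝ (Fin n) => ‖v‖ ^ 2 :=
    (convexOn_norm convex_univ).pow (fun _ _ => norm_nonneg _) 2
  have := hconv.map_sum_le (fun t _ => Sbar_weight_nonneg hk t) (sum_Sbar_weight_eq_one hk)
    (p := fun t => y t ω - z t ω) fun _ _ => Set.mem_univ _
  simp only [smul_sub, sum_sub_distrib, smul_eq_mul] at this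
  rw [avgIter2_eq_sum, avgIter2_eq_sum, mul_sum]
  simpa only [mul_assoc] using this

theorem integral_norm_avgIter2_sub_sq_le [MeasurableSpace Ω'] {μ' : Measure Ω'} (hk : 1 ≤ k)
    {y z : ℕ → Ω' → EuclideanSpace ℝ (Fin n)} {M : ℝ}
    (hint : Integrable (fun ω => ‖avgIter2 y k ω - avgIter2 z k ω‖ ^ 2) μ')
    (hint_t : ∀ t, Integrable (fun ω => ‖y t ω - z t ω‖ ^ 2) μ')
    (hM : ∑ t ∈ range k, ((t : ℝ) + 1) ^ 2 * ∫ ω, ‖y t ω - z t ω‖ ^ 2 ∂μ' ≤ M) :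
    ∫ ω, ‖avgIter2 y k ω - avgIter2 z k ω‖ ^ 2 ∂μ' ≤ M / Sbar k := by
  have hint_sum : ∀ t ∈ range k,
      Integrable (fun ω => ((t : ℝ) + 1) ^ 2 * ‖y t ω - z t ω‖ ^ 2) μ' :=
    fun t _ => (hint_t t).const_mul _
  calc _ ≤ ∫ ω, (Sbar k)⁻¹ * ∑ t ∈ range k, ((t : ℝ) + 1) ^ 2 * ‖y t ω - z t ω‖ ^ 2 ∂μ' :=
        integral_mono hint ((integrable_finsetSum _ hint_sum).const_mul _)
          (norm_avgIter2_sub_sq_le hk y z)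
    _ = (Sbar k)⁻¹ * ∑ t ∈ range k, ((t : ℝ) + 1) ^ 2 * ∫ ω, ‖y t ω - z t ω‖ ^ 2 ∂μ' := by
        rw [integral_const_mul, integral_finsetSum _ hint_sum]
        simp only [integral_const_mul]
    _ ≤ M / Sbar k := by
        rw [inv_mul_eq_div]
        exact div_le_div_of_nonneg_right hM (Sbar_pos hk).le

theorem integral_norm_avgIter2_sub_const_sq_le [MeasurableSpace Ω'] {μ' : Measure Ω'}
    (hk : 1 ≤ k) {y : ℕ → Ω' → EuclideanSpace ℝ (Fin n)} {z : EuclideanSpace ℝ (Fin n)} {M : ℝ}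
    (hint : Integrable (fun ω => ‖avgIter2 y k ω - z‖ ^ 2) μ')
    (hint_t : ∀ t, Integrable (fun ω => ‖y t ω - z‖ ^ 2) μ')
    (hM : ∑ t ∈ range k, ((t : ℝ) + 1) ^ 2 * ∫ ω, ‖y t ω - z‖ ^ 2 ∂μ' ≤ M) :
    ∫ ω, ‖avgIter2 y k ω - z‖ ^ 2 ∂μ' ≤ M / Sbar k := by
  simpa only [avgIter2_const hk] using integral_norm_avgIter2_sub_sq_le hk (z := fun _ _ => z)
    (by simpa only [avgIter2_const hk] using hint) hint_t hM

theorem integral_infDist_avgIter2_sq_le [MeasurableSpace Ω'] {μ' : Measure Ω'}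
    {X : Set (EuclideanSpace ℝ (Fin n))} (hX : Convex ℝ X) (hk : 1 ≤ k)
    {y z : ℕ → Ω' → EuclideanSpace ℝ (Fin n)} (hz : ∀ t ω, z t ω ∈ X)
    (hint : Integrable (fun ω => infDist (avgIter2 y k ω) X ^ 2) μ')
    (hint' : Integrable (fun ω => ‖avgIter2 y k ω - avgIter2 z k ω‖ ^ 2) μ') :
    ∫ ω, infDist (avgIter2 y k ω) X ^ 2 ∂μ'
      ≤ ∫ ω, ‖avgIter2 y k ω - avgIter2 z k ω‖ ^ 2 ∂μ' := by
  refine integral_mono hint hint' fun ω => pow_le_pow_left₀ infDist_nonneg ?_ 2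
  rw [← dist_eq_norm]
  exact infDist_le_dist_of_mem (avgIter2_mem hX (fun t => hz t ω) hk)

end WeightedAverage

section Recurrence

variable {a b d α : ℕ → ℝ} {μ γ C : ℝ}

theorem sq_mul_add_sum_le_of_recurrence (hμ : 0 < μ)
    (hα : ∀ k : ℕ, α k = 2 / (μ * ((k : ℝ) + 1))) (ha : ∀ k, 0 ≤ a k)
    (hrec : ∀ k : ℕ, a (k + 1) ≤ (1 - μ * α k) * a k - μ * α k * b k - γ * d k + C * α k ^ 2)
    (k : ℕ) :
    (k : ℝ) ^ 2 * a k + ∑ t ∈ range k, (2 * ((t : ℝ) + 1) * b t + γ * ((t : ℝ) + 1) ^ 2 * d t)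
      ≤ 4 * C * k / μ ^ 2 := by
  induction k with
  | zero => simp
  | succ m ih =>
    have hstep : ((m : ℝ) + 1) ^ 2 * a (m + 1) ≤ (m : ℝ) ^ 2 * a m - a m
        - 2 * ((m : ℝ) + 1) * b m - γ * ((m : ℝ) + 1) ^ 2 * d m + 4 * C / μ ^ 2 := by
      have h := mul_le_mul_of_nonneg_left (hrec m) (sq_nonneg ((m : ℝ) + 1))
      rw [hα] at h
      refine h.trans_eq ?_
      field_simp
      ring
    have hsplit : 4 * C * ((m : ℝ) + 1) / μ ^ 2 = 4 * C * m / μ ^ 2 + 4 * C / μ ^ 2 := by ring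
    rw [sum_range_succ]
    push_cast
    linarith [ha m]

theorem sum_sq_mul_le_of_recurrence (hμ : 0 < μ) (hγ : 0 < γ)
    (hα : ∀ k : ℕ, α k = 2 / (μ * ((k : ℝ) + 1)))
    (hrec : ∀ k : ℕ, a (k + 1) ≤ (1 - μ * α k) * a k - μ * α k * b k - γ * d k + C * α k ^ 2)
    (ha : ∀ k, 0 ≤ a k) (hb : ∀ k, 0 ≤ b k) (hd : ∀ k, 0 ≤ d k)
    (k : ℕ) :
    ∑ t ∈ range k, ((t : ℝ) + 1) ^ 2 * b t ≤ 2 * C * k ^ 2 / μ ^ 2 ∧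
      ∑ t ∈ range k, ((t : ℝ) + 1) ^ 2 * d t ≤ 4 * C * k / (γ * μ ^ 2) := by
  have hsum : 2 * ∑ t ∈ range k, ((t : ℝ) + 1) * b t
      + γ * ∑ t ∈ range k, ((t : ℝ) + 1) ^ 2 * d t ≤ 4 * C * k / μ ^ 2 := by
    simpa only [sum_add_distrib, mul_assoc, ← mul_sum] using le_of_add_le_of_nonneg_right
      (sq_mul_add_sum_le_of_recurrence hμ hα ha hrec k) (mul_nonneg (sq_nonneg _) (ha k))
  have hb_sum : 0 ≤ ∑ t ∈ range k, ((t : ℝ) + 1) * b t :=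
    sum_nonneg fun t _ => mul_nonneg (by positivity) (hb t)
  have hd_sum : 0 ≤ ∑ t ∈ range k, ((t : ℝ) + 1) ^ 2 * d t :=
    sum_nonneg fun t _ => mul_nonneg (sq_nonneg _) (hd t)
  constructor
  · calc ∑ t ∈ range k, ((t : ℝ) + 1) ^ 2 * b t
          ≤ ∑ t ∈ range k, (k : ℝ) * (((t : ℝ) + 1) * b t) := by
            refine sum_le_sum fun t ht => ?_
            have htk : (t : ℝ) + 1 ≤ k := by exact_mod_cast mem_range.1 ht
            rw [sq, mul_assoc]
            exact mul_le_mul_of_nonneg_right htk (mul_nonneg (by positivity) (hb t))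
        _ ≤ k * (2 * C * k / μ ^ 2) := by
            rw [← mul_sum]
            gcongr
            have h4 : 4 * C * k / μ ^ 2 = 2 * (2 * C * k / μ ^ 2) := by ring
            linarith [mul_nonneg hγ.le hd_sum]
        _ = 2 * C * k ^ 2 / μ ^ 2 := by ring
  · have h := (le_div_iff₀' hγ).2 (by linarith : γ * ∑ t ∈ range k, ((t : ℝ) + 1) ^ 2 * d t
      ≤ 4 * C * k / μ ^ 2)
    rwa [div_div, mul_comm (μ ^ 2)] at h

end Recurrence

theorem stmt_18_general {n : ℕ} {Ω' : Type*} [MeasurableSpace Ω']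
    (μ' : Measure Ω')
    (X : Set (EuclideanSpace ℝ (Fin n)))
    (hXcv : Convex ℝ X)
    (xstar : EuclideanSpace ℝ (Fin n))
    (μ γ Chat : ℝ) (hμ : 0 < μ) (hγ : 0 < γ) (hChat : 0 < Chat)
    (α : ℕ → ℝ) (hα : ∀ k : ℕ, α k = 2 / (μ * ((k : ℝ) + 1)))
    (x : ℕ → Ω' → EuclideanSpace ℝ (Fin n))
    -- `w k ω = Π_X(x k ω)` : projection of the iterates onto `X`
    (w : ℕ → Ω' → EuclideanSpace ℝ (Fin n))
    (hwmem : ∀ k ω, w k ω ∈ X)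
    (hwproj : ∀ k ω, ∀ y ∈ X, ‖x k ω - w k ω‖ ≤ ‖x k ω - y‖)
    -- measurability and integrability of all quantities appearing below
    (hInt2 : ∀ k, Integrable (fun ω => ‖w k ω - xstar‖ ^ 2) μ')
    (hInt3 : ∀ k, Integrable (fun ω => (infDist (x k ω) X) ^ 2) μ')
    (hInt4 : ∀ k, Integrable (fun ω => ‖avgIter2 w k ω - xstar‖ ^ 2) μ')
    (hInt5 : ∀ k, Integrable (fun ω => ‖avgIter2 x k ω - avgIter2 w k ω‖ ^ 2) μ')
    (hInt6 : ∀ k, Integrable (fun ω => (infDist (avgIter2 x k ω) X) ^ 2) μ')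
    (hInt7 : ∀ k, Integrable (fun ω => ‖avgIter2 x k ω - xstar‖ ^ 2) μ')
    -- the per-step recurrence (Lemma 6 of the paper)
    (hrec : ∀ k : ℕ, ∫ ω, ‖x (k + 1) ω - xstar‖ ^ 2 ∂μ'
        ≤ (1 - μ * α k) * ∫ ω, ‖x k ω - xstar‖ ^ 2 ∂μ'
          - μ * α k * ∫ ω, ‖w k ω - xstar‖ ^ 2 ∂μ'
          - γ * ∫ ω, (infDist (x k ω) X) ^ 2 ∂μ' + Chat * α k ^ 2) :
    (∀ k : ℕ, 1 ≤ k →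
      (∫ ω, ‖avgIter2 w k ω - xstar‖ ^ 2 ∂μ'
          ≤ 2 * Chat * k * ((k : ℝ) + 1) / (μ ^ 2 * Sbar k)) ∧
      (∫ ω, (infDist (avgIter2 x k ω) X) ^ 2 ∂μ'
          ≤ ∫ ω, ‖avgIter2 x k ω - avgIter2 w k ω‖ ^ 2 ∂μ') ∧
      (∫ ω, ‖avgIter2 x k ω - avgIter2 w k ω‖ ^ 2 ∂μ'
          ≤ 4 * Chat * k / (γ * μ ^ 2 * Sbar k)) ∧
      (∫ ω, ‖avgIter2 x k ω - xstar‖ ^ 2 ∂μ'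
          ≤ 4 * Chat * k * ((k : ℝ) + 1) / (μ ^ 2 * Sbar k)
            + 8 * Chat * k / (γ * μ ^ 2 * Sbar k))) ∧
    -- in particular, `E[‖x̂_k - x*‖²] = O(1/k)` and `E[dist²(x̂_k, X)] = O(1/k²)`
    (∃ C₁ : ℝ, ∀ k : ℕ, 1 ≤ k →
      ∫ ω, ‖avgIter2 x k ω - xstar‖ ^ 2 ∂μ' ≤ C₁ / k) ∧
    (∃ C₂ : ℝ, ∀ k : ℕ, 1 ≤ k →
      ∫ ω, (infDist (avgIter2 x k ω) X) ^ 2 ∂μ' ≤ C₂ / (k : ℝ) ^ 2) := by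
  have hdist : ∀ t ω, infDist (x t ω) X = ‖x t ω - w t ω‖ := fun t ω =>
    infDist_eq_norm_sub_of_forall_norm_sub_le (hwmem t ω) (hwproj t ω)
  simp only [hdist] at hInt3 hrec
  have hsums := sum_sq_mul_le_of_recurrence (a := fun k => ∫ ω, ‖x k ω - xstar‖ ^ 2 ∂μ')
    hμ hγ hα hrec (fun _ => integral_nonneg fun _ => sq_nonneg _)
    (fun _ => integral_nonneg fun _ => sq_nonneg _) (fun _ => integral_nonneg fun _ => sq_nonneg _)
  have hi (k : ℕ) (hk : 1 ≤ k) : ∫ ω, ‖avgIter2 w k ω - xstar‖ ^ 2 ∂μ'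
      ≤ 2 * Chat * k * ((k : ℝ) + 1) / (μ ^ 2 * Sbar k) := by
    refine (integral_norm_avgIter2_sub_const_sq_le hk (hInt4 k) hInt2 (hsums k).1).trans ?_
    rw [div_div, sq, ← mul_assoc]
    gcongr
    · exact (mul_pos (by positivity) (Sbar_pos hk)).le
    · linarith
  have hiii (k : ℕ) (hk : 1 ≤ k) : ∫ ω, ‖avgIter2 x k ω - avgIter2 w k ω‖ ^ 2 ∂μ'
      ≤ 4 * Chat * k / (γ * μ ^ 2 * Sbar k) := by
    simpa only [div_div] using integral_norm_avgIter2_sub_sq_le hk (hInt5 k) hInt3 (hsums k).2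
  have hiv (k : ℕ) (hk : 1 ≤ k) : ∫ ω, ‖avgIter2 x k ω - xstar‖ ^ 2 ∂μ'
      ≤ 4 * Chat * k * ((k : ℝ) + 1) / (μ ^ 2 * Sbar k) + 8 * Chat * k / (γ * μ ^ 2 * Sbar k) :=
    (integral_norm_sub_sq_le (hInt7 k) (hInt5 k) (hInt4 k) (hiii k hk) (hi k hk)).trans_eq
      (by ring)
  have hii (k : ℕ) (hk : 1 ≤ k) := integral_infDist_avgIter2_sq_le hXcv hk hwmem (hInt6 k) (hInt5 k)
  refine ⟨fun k hk => ⟨hi k hk, hii k hk, hiii k hk, hiv k hk⟩,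
    ⟨3 * (4 * Chat) / μ ^ 2 + 3 * (8 * Chat) / (γ * μ ^ 2), fun k hk => ?_⟩,
    ⟨3 * (4 * Chat) / (γ * μ ^ 2), fun k hk => ?_⟩⟩
  · rw [add_div]
    exact (hiv k hk).trans (add_le_add (mul_mul_succ_div_mul_Sbar_le hk (by positivity)
      (by positivity)) (mul_div_mul_Sbar_le_div hk (by positivity) (by positivity)))
  · exact (hii k hk).trans ((hiii k hk).trans
      (mul_div_mul_Sbar_le_div_sq hk (by positivity) (by positivity)))

theorem stmt_18 {n : ℕ} {Ω' : Type*} [MeasurableSpace Ω']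
    (μ' : Measure Ω') [IsProbabilityMeasure μ']
    (X : Set (EuclideanSpace ℝ (Fin n)))
    (hXne : X.Nonempty) (hXcl : IsClosed X) (hXcv : Convex ℝ X)
    (xstar : EuclideanSpace ℝ (Fin n)) (hxstar : xstar ∈ X)
    (μ γ Chat : ℝ) (hμ : 0 < μ) (hγ : 0 < γ) (hChat : 0 < Chat)
    (α : ℕ → ℝ) (hα : ∀ k : ℕ, α k = 2 / (μ * ((k : ℝ) + 1)))
    (x : ℕ → Ω' → EuclideanSpace ℝ (Fin n))
    -- `w k ω = Π_X(x k ω)` : projection of the iterates onto `X`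
    (w : ℕ → Ω' → EuclideanSpace ℝ (Fin n))
    (hwmem : ∀ k ω, w k ω ∈ X)
    (hwproj : ∀ k ω, ∀ y ∈ X, ‖x k ω - w k ω‖ ≤ ‖x k ω - y‖)
    -- measurability and integrability of all quantities appearing below
    (hmeas : ∀ k, Measurable (x k)) (hmeasw : ∀ k, Measurable (w k))
    (hInt1 : ∀ k, Integrable (fun ω => ‖x k ω - xstar‖ ^ 2) μ')
    (hInt2 : ∀ k, Integrable (fun ω => ‖w k ω - xstar‖ ^ 2) μ')
    (hInt3 : ∀ k, Integrable (fun ω => (infDist (x k ω) X) ^ 2) μ')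
    (hInt4 : ∀ k, Integrable (fun ω => ‖avgIter2 w k ω - xstar‖ ^ 2) μ')
    (hInt5 : ∀ k, Integrable (fun ω => ‖avgIter2 x k ω - avgIter2 w k ω‖ ^ 2) μ')
    (hInt6 : ∀ k, Integrable (fun ω => (infDist (avgIter2 x k ω) X) ^ 2) μ')
    (hInt7 : ∀ k, Integrable (fun ω => ‖avgIter2 x k ω - xstar‖ ^ 2) μ')
    -- the per-step recurrence (Lemma 6 of the paper)
    (hrec : ∀ k : ℕ, ∫ ω, ‖x (k + 1) ω - xstar‖ ^ 2 ∂μ'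
        ≤ (1 - μ * α k) * ∫ ω, ‖x k ω - xstar‖ ^ 2 ∂μ'
          - μ * α k * ∫ ω, ‖w k ω - xstar‖ ^ 2 ∂μ'
          - γ * ∫ ω, (infDist (x k ω) X) ^ 2 ∂μ' + Chat * α k ^ 2) :
    (∀ k : ℕ, 1 ≤ k →
      (∫ ω, ‖avgIter2 w k ω - xstar‖ ^ 2 ∂μ'
          ≤ 2 * Chat * k * ((k : ℝ) + 1) / (μ ^ 2 * Sbar k)) ∧
      (∫ ω, (infDist (avgIter2 x k ω) X) ^ 2 ∂μ'
          ≤ ∫ ω, ‖avgIter2 x k ω - avgIter2 w k ω‖ ^ 2 ∂μ') ∧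
      (∫ ω, ‖avgIter2 x k ω - avgIter2 w k ω‖ ^ 2 ∂μ'
          ≤ 4 * Chat * k / (γ * μ ^ 2 * Sbar k)) ∧
      (∫ ω, ‖avgIter2 x k ω - xstar‖ ^ 2 ∂μ'
          ≤ 4 * Chat * k * ((k : ℝ) + 1) / (μ ^ 2 * Sbar k)
            + 8 * Chat * k / (γ * μ ^ 2 * Sbar k))) ∧
    -- in particular, `E[‖x̂_k - x*‖²] = O(1/k)` and `E[dist²(x̂_k, X)] = O(1/k²)`
    (∃ C₁ : ℝ, ∀ k : ℕ, 1 ≤ k →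
      ∫ ω, ‖avgIter2 x k ω - xstar‖ ^ 2 ∂μ' ≤ C₁ / k) ∧
    (∃ C₂ : ℝ, ∀ k : ℕ, 1 ≤ k →
      ∫ ω, (infDist (avgIter2 x k ω) X) ^ 2 ∂μ' ≤ C₂ / (k : ℝ) ^ 2) :=
  stmt_18_general μ' X hXcv xstar μ γ Chat hμ hγ hChat α hα x w hwmem hwproj hInt2 hInt3 hInt4 hInt5
    hInt6 hInt7 hrec
end
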